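/- Let A be any ring (2 not assumed invertible), P ∈ A, and suppose u = (1−P) + P·z is a unit in A[z,z⁻¹]. Define E ∈ A as the coefficient of z⁰ in (P·z)·u⁻¹. Then E² = E. -/

import Mathlib

/-!
Write `u = 1 - P + P z` and `v = u⁻¹ = ∑ vₙ zⁿ`. Since `z` is central, `P` commutes with `u`, hence
with `v` and with every `vₙ`. Multiplying the resolvent identity
`v(w) - v(z) = v(z) P (z - w) v(w)` by `P` and comparing coefficients of `zᵐ wⁿ` gives, for
`eₙ = P vₙ₋₁`, the relations `e₀ e₀ - e₁ e₋₁ = e₀` and `eₖ₊₁ e₋ₖ₋₁ = eₖ₊₂ e₋ₖ₋₂` for `k ≥ 0`.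
So `E² - E = eₖ e₋ₖ` for every `k ≥ 1`, which vanishes once `vₖ₋₁ = 0`, as it does for large `k`.
-/

open LaurentPolynomial

namespace LaurentPolynomial

section Semiring

variable {R : Type*} [Semiring R]

lemma coeff_C_mul (a : R) (f : R[T;T⁻¹]) (n : ℤ) : (C a * f).coeff n = a * f.coeff n := by
  rw [← single_eq_C, AddMonoidAlgebra.coeff_single_mul_apply, neg_zero, zero_add]

lemma coeff_mul_C (f : R[T;T⁻¹]) (a : R) (n : ℤ) : (f * C a).coeff n = f.coeff n * a := by
  rw [← single_eq_C, AddMonoidAlgebra.coeff_mul_single_apply, neg_zero, add_zero]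

lemma coeff_C_mul_T_mul (a : R) (m : ℤ) (f : R[T;T⁻¹]) (n : ℤ) :
    (C a * T m * f).coeff n = a * f.coeff (n - m) := by
  rw [← single_eq_C_mul_T, AddMonoidAlgebra.coeff_single_mul_apply, neg_add_eq_sub]

lemma coeff_one (n : ℤ) : (1 : R[T;T⁻¹]).coeff n = if n = 0 then 1 else 0 := by
  rw [← T_zero, T_apply]
  simp only [eq_comm]

lemma commute_coeff_of_commute_C {a : R} {f : R[T;T⁻¹]} (h : Commute (C a) f) (n : ℤ) :
    Commute a (f.coeff n) := by
  have h_n := congrArg (fun g => g.coeff n) h.eq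
  simp only [coeff_C_mul, coeff_mul_C] at h_n
  exact h_n

lemma exists_coeff_natCast_eq_zero (f : R[T;T⁻¹]) : ∃ k : ℕ, f.coeff k = 0 := by
  obtain ⟨k, hk⟩ := Infinite.exists_notMem_finset
    (f.coeff.support.preimage ((↑) : ℕ → ℤ) Nat.cast_injective.injOn)
  exact ⟨k, by simpa using hk⟩

end Semiring

section Ring

variable {R : Type*} [Ring R]

lemma coeff_recurrence_of_mul_eq_one {a : R} {f : R[T;T⁻¹]}
    (h : (1 - C a + C a * T 1) * f = 1) (n : ℤ) :
    (1 - a) * f.coeff n + a * f.coeff (n - 1) = if n = 0 then 1 else 0 := by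
  rw [show (1 : R[T;T⁻¹]) - C a = C (1 - a) by simp] at h
  have h_n := congrArg (fun g => g.coeff n) h
  simpa only [add_mul, AddMonoidAlgebra.coeff_add, Finsupp.add_apply, coeff_C_mul,
    coeff_C_mul_T_mul, coeff_one] using h_n

lemma commute_C_one_sub_C_add_C_mul_T (a : R) :
    Commute (C a) (1 - C a + C a * T 1) :=
  ((Commute.one_right _).sub_right (Commute.refl _)).add_right
    ((Commute.refl _).mul_right (commute_T 1 _).symm)

end Ring

end LaurentPolynomial

section Recurrence

variable {A : Type*} [Ring A] {P : A} {v : ℤ → A}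

/-- The coefficient of `zᵐ wⁿ` in `P² (z - w) v(z) v(w) = P v(w) - P v(z)`. -/
lemma mul_sub_mul_of_recurrence (hcomm : ∀ n, Commute P (v n))
    (hrec : ∀ n, (1 - P) * v n + P * v (n - 1) = if n = 0 then 1 else 0) (m n : ℤ) :
    P * v (m - 1) * (P * v n) - P * v m * (P * v (n - 1))
      = (if m = 0 then P * v n else 0) - (if n = 0 then P * v m else 0) := by
  have hm : P * v (m - 1) = (if m = 0 then 1 else 0) - (1 - P) * v m :=
    eq_sub_of_add_eq' (hrec m)
  have hn : P * v (n - 1) = (if n = 0 then 1 else 0) - (1 - P) * v n :=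
    eq_sub_of_add_eq' (hrec n)
  have hswap : (1 - P) * v m * (P * v n) = P * v m * ((1 - P) * v n) :=
    calc (1 - P) * v m * (P * v n) = v m * P * v n - P * v m * P * v n := by noncomm_ring
      _ = P * v m * v n - P * v m * P * v n := by rw [← (hcomm m).eq]
      _ = P * v m * ((1 - P) * v n) := by noncomm_ring
  rw [hm, hn, sub_mul, mul_sub, hswap]
  split_ifs <;> simp only [one_mul, mul_one, zero_mul, mul_zero] <;> abel

lemma mul_eq_mul_natCast_of_recurrence (hcomm : ∀ n, Commute P (v n))
    (hrec : ∀ n, (1 - P) * v n + P * v (n - 1) = if n = 0 then 1 else 0) (k : ℕ) :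
    P * v 0 * (P * v (-2)) = P * v k * (P * v (-k - 2)) := by
  induction k with
  | zero => simp
  | succ k ih =>
    have step := mul_sub_mul_of_recurrence hcomm hrec (k + 1) (-k - 2)
    rw [if_neg (by omega), if_neg (by omega), sub_zero, sub_eq_zero, add_sub_cancel_right,
      show -(k : ℤ) - 2 - 1 = -(k + 1 : ℤ) - 2 by ring] at step
    rw [ih, step]
    push_cast
    rfl

theorem isIdempotentElem_of_recurrence (hcomm : ∀ n, Commute P (v n))
    (hrec : ∀ n, (1 - P) * v n + P * v (n - 1) = if n = 0 then 1 else 0)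
    (hfin : ∃ k : ℕ, v k = 0) :
    IsIdempotentElem (P * v (-1)) := by
  obtain ⟨k, hk⟩ := hfin
  have h0 := mul_sub_mul_of_recurrence hcomm hrec 0 (-1)
  norm_num at h0
  calc P * v (-1) * (P * v (-1)) = P * v (-1) + P * v 0 * (P * v (-2)) :=
        sub_eq_iff_eq_add.mp h0
    _ = P * v (-1) + P * v k * (P * v (-k - 2)) := by
        rw [mul_eq_mul_natCast_of_recurrence hcomm hrec k]
    _ = P * v (-1) := by rw [hk, mul_zero, zero_mul, add_zero]

end Recurrence

theorem stmt_9 (A : Type*) [Ring A] (P : A)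
    (hu : IsUnit ((1 - C P) + C P * T 1))
    (E : A)
    (hE : E = (((C P * T 1 * ((hu.unit⁻¹ : (LaurentPolynomial A)ˣ) : LaurentPolynomial A) :
      LaurentPolynomial A).coeff : ℤ →₀ A) 0)) :
    E ^ 2 = E := by
  set v : LaurentPolynomial A := ((hu.unit⁻¹ : (LaurentPolynomial A)ˣ) : LaurentPolynomial A)
  have hcomm : Commute (C P) v := by
    have h := commute_C_one_sub_C_add_C_mul_T P
    rw [← hu.unit_spec] at h
    exact h.units_inv_right
  rw [hE, coeff_C_mul_T_mul, zero_sub, sq]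
  exact isIdempotentElem_of_recurrence (commute_coeff_of_commute_C hcomm)
    (coeff_recurrence_of_mul_eq_one hu.mul_val_inv) (exists_coeff_natCast_eq_zero v)
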